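/- arXiv:1803.06797 — 4 statements merged into one kernel-verified Lean document; each statement's English description precedes it below -/
import Mathlib

section
/- Let K be a finite nonempty set, ρ : K → ℝ with ρ_k > 0, c ≥ 0, and let F̄ : ℝ → [0,1] be a fixed function (the common tail distribution of valuations). Define R(p) = (∑_k ρ_k (p_k − c) F̄(p_k)) / (1 + ∑_k ρ_k F̄(p_k)) for price vectors p : K → [0, v̄] where v̄ > 0. Then sup over all price vectors p of R(p) equals sup over single prices q ∈ [0, v̄] of (ρ (q − c) F̄(q)) / (1 + ρ F̄(q)), where ρ = ∑_k ρ_k. In particular, if a maximizer q* of the single-price problem exists, the constant vector p_k = q* for all k is optimal for R. -/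
/-!
Multiplying numerator and denominator of `R p` by `ρ = ∑ ρₖ` and writing `1 = ∑ ρₖ / ρ` exhibits
`R p` as the weighted mediant, with weights `ρₖ`, of the single-price rates at the prices `pₖ`.
A mediant never exceeds the largest of its fractions, so every price vector is dominated by the
single price `pₖ` with the best single-price rate, while constant price vectors realize exactly the
single-price rates.
-/

theorem Finset.sum_mul_div_sum_mul_le {ι : Type*} (s : Finset ι) (w a b : ι → ℝ) (r : ℝ)
    (hw : ∀ i ∈ s, 0 ≤ w i) (hpos : 0 < ∑ i ∈ s, w i * b i) (h : ∀ i ∈ s, a i ≤ r * b i) :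
    (∑ i ∈ s, w i * a i) / (∑ i ∈ s, w i * b i) ≤ r := by
  rw [div_le_iff₀ hpos, Finset.mul_sum]
  refine Finset.sum_le_sum fun i hi => ?_
  calc w i * a i ≤ w i * (r * b i) := mul_le_mul_of_nonneg_left (h i hi) (hw i hi)
    _ = r * (w i * b i) := by ring

section PriceRates

variable {K : Type*} [Fintype K]

noncomputable def earningRate (ρk : K → ℝ) (c : ℝ) (Fbar : ℝ → ℝ) (p : K → ℝ) : ℝ :=
  (∑ k, ρk k * (p k - c) * Fbar (p k)) / (1 + ∑ k, ρk k * Fbar (p k))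

noncomputable def singlePriceRate (ρ c : ℝ) (Fbar : ℝ → ℝ) (q : ℝ) : ℝ :=
  ρ * (q - c) * Fbar q / (1 + ρ * Fbar q)

theorem earningRate_const (ρk : K → ℝ) (c : ℝ) (Fbar : ℝ → ℝ) (q : ℝ) :
    earningRate ρk c Fbar (fun _ => q) = singlePriceRate (∑ k, ρk k) c Fbar q := by
  simp only [earningRate, singlePriceRate, ← Finset.sum_mul]

theorem earningRate_eq_mediant (ρk : K → ℝ) (hρ : 0 < ∑ k, ρk k) (c : ℝ) (Fbar : ℝ → ℝ)
    (p : K → ℝ) :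
    earningRate ρk c Fbar p =
      (∑ k, ρk k * ((∑ j, ρk j) * (p k - c) * Fbar (p k))) /
        ∑ k, ρk k * (1 + (∑ j, ρk j) * Fbar (p k)) := by
  set ρ := ∑ j, ρk j
  have hnum : ∑ k, ρk k * (ρ * (p k - c) * Fbar (p k)) =
      ρ * ∑ k, ρk k * (p k - c) * Fbar (p k) := by
    rw [Finset.mul_sum]; exact Finset.sum_congr rfl fun k _ => by ring
  have hden : ∑ k, ρk k * (1 + ρ * Fbar (p k)) = ρ * (1 + ∑ k, ρk k * Fbar (p k)) := by
    simp only [mul_add, mul_one, Finset.sum_add_distrib, Finset.mul_sum]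
    exact congrArg _ (Finset.sum_congr rfl fun k _ => by ring)
  rw [earningRate, hnum, hden, mul_div_mul_left _ _ hρ.ne']

theorem earningRate_le_of_forall_singlePriceRate_le [Nonempty K] (ρk : K → ℝ)
    (hρ : ∀ k, 0 < ρk k) (c : ℝ) (Fbar : ℝ → ℝ) (hF : ∀ x, 0 ≤ Fbar x) (p : K → ℝ) (r : ℝ)
    (h : ∀ k, singlePriceRate (∑ j, ρk j) c Fbar (p k) ≤ r) :
    earningRate ρk c Fbar p ≤ r := by
  have hρsum : 0 < ∑ j, ρk j := Finset.sum_pos (fun k _ => hρ k) Finset.univ_nonempty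
  have hden : ∀ k, 0 < 1 + (∑ j, ρk j) * Fbar (p k) := fun k => by
    have := mul_nonneg hρsum.le (hF (p k)); linarith
  rw [earningRate_eq_mediant ρk hρsum]
  refine Finset.sum_mul_div_sum_mul_le _ _ _ _ _ (fun k _ => (hρ k).le)
    (Finset.sum_pos (fun k _ => mul_pos (hρ k) (hden k)) Finset.univ_nonempty)
    fun k _ => (div_le_iff₀ (hden k)).mp (h k)

end PriceRates

theorem stmt1_general (K : Type*) [Fintype K] [Nonempty K]
    (ρk : K → ℝ) (hρ : ∀ k, 0 < ρk k)
    (c : ℝ)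
    (vbar : ℝ)
    (Fbar : ℝ → ℝ) (hF : ∀ x, Fbar x ∈ Set.Icc (0:ℝ) 1)
    (R : (K → ℝ) → ℝ)
    (hR : ∀ p, R p = (∑ k, ρk k * (p k - c) * Fbar (p k)) /
        (1 + ∑ k, ρk k * Fbar (p k))) :
    (sSup {r : ℝ | ∃ p : K → ℝ, (∀ k, p k ∈ Set.Icc 0 vbar) ∧ r = R p} =
      sSup {r : ℝ | ∃ q ∈ Set.Icc 0 vbar,
        r = ((∑ k, ρk k) * (q - c) * Fbar q) / (1 + (∑ k, ρk k) * Fbar q)}) ∧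
    (∀ qstar ∈ Set.Icc 0 vbar,
      (∀ q ∈ Set.Icc 0 vbar,
        ((∑ k, ρk k) * (q - c) * Fbar q) / (1 + (∑ k, ρk k) * Fbar q) ≤
        ((∑ k, ρk k) * (qstar - c) * Fbar qstar) / (1 + (∑ k, ρk k) * Fbar qstar)) →
      ∀ p : K → ℝ, (∀ k, p k ∈ Set.Icc 0 vbar) →
        R p ≤ R (fun _ => qstar)) := by
  obtain rfl : R = earningRate ρk c Fbar := funext hR
  have dominated := earningRate_le_of_forall_singlePriceRate_le ρk hρ c Fbar fun x => (hF x).1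
  refine ⟨csSup_eq_csSup_of_forall_exists_le ?_ ?_, ?_⟩
  · rintro _ ⟨p, hp, rfl⟩
    obtain ⟨k₀, hk₀⟩ := Finite.exists_max fun k => singlePriceRate (∑ j, ρk j) c Fbar (p k)
    exact ⟨_, ⟨p k₀, hp k₀, rfl⟩, dominated p _ hk₀⟩
  · rintro _ ⟨q, hq, rfl⟩
    exact ⟨_, ⟨fun _ => q, fun _ => hq, rfl⟩, (earningRate_const ρk c Fbar q).ge⟩
  · intro qstar _ hmax p hp
    rw [earningRate_const]
    exact dominated p _ fun k => hmax (p k) (hp k)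

theorem stmt1 (K : Type*) [Fintype K] [Nonempty K]
    (ρk : K → ℝ) (hρ : ∀ k, 0 < ρk k)
    (c : ℝ) (hc : 0 ≤ c)
    (vbar : ℝ) (hv : 0 < vbar)
    (Fbar : ℝ → ℝ) (hF : ∀ x, Fbar x ∈ Set.Icc (0:ℝ) 1)
    (R : (K → ℝ) → ℝ)
    (hR : ∀ p, R p = (∑ k, ρk k * (p k - c) * Fbar (p k)) /
        (1 + ∑ k, ρk k * Fbar (p k))) :
    (sSup {r : ℝ | ∃ p : K → ℝ, (∀ k, p k ∈ Set.Icc 0 vbar) ∧ r = R p} =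
      sSup {r : ℝ | ∃ q ∈ Set.Icc 0 vbar,
        r = ((∑ k, ρk k) * (q - c) * Fbar q) / (1 + (∑ k, ρk k) * Fbar q)}) ∧
    (∀ qstar ∈ Set.Icc 0 vbar,
      (∀ q ∈ Set.Icc 0 vbar,
        ((∑ k, ρk k) * (q - c) * Fbar q) / (1 + (∑ k, ρk k) * Fbar q) ≤
        ((∑ k, ρk k) * (qstar - c) * Fbar qstar) / (1 + (∑ k, ρk k) * Fbar qstar)) →
      ∀ p : K → ℝ, (∀ k, p k ∈ Set.Icc 0 vbar) →
        R p ≤ R (fun _ => qstar)) :=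
  stmt1_general K ρk hρ c vbar Fbar hF R hR
end

section
/- Let X and Y be independent nonnegative real random variables with Y exponentially distributed with rate γ > 0, and suppose P(X > 0) > 0 (so that E[min(X,Y)] > 0). Then P(Y ≤ X) / E[min(X,Y)] = γ. -/
/-!
By independence we may condition on `X = x ≥ 0`, where `P(Y ≤ x) = 1 - e^{-γx}` and, by the
layer-cake formula, `E[min(x, Y)] = ∫₀ˣ P(Y > t) dt = (1 - e^{-γx}) / γ`. Integrating over the law
of `X`, `E[min(X, Y)] = P(Y ≤ X) / γ`, and `P(Y ≤ X) = E[1 - e^{-γX}] > 0` because the integrand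
is positive exactly on `{X > 0}`.
-/

open MeasureTheory Real ProbabilityTheory Set

namespace ProbabilityTheory.IndepFun

variable {Ω α β : Type*} {mΩ : MeasurableSpace Ω} {mα : MeasurableSpace α}
  {mβ : MeasurableSpace β} {μ : Measure Ω} [IsFiniteMeasure μ] {X : Ω → α} {Y : Ω → β}

theorem lintegral_comp_eq_lintegral_lintegral (hXY : IndepFun X Y μ) (hX : Measurable X)
    (hY : Measurable Y) {f : α × β → ENNReal} (hf : Measurable f) :
    ∫⁻ ω, f (X ω, Y ω) ∂μ = ∫⁻ ω, ∫⁻ ω', f (X ω, Y ω') ∂μ ∂μ := by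
  rw [← lintegral_map hf (hX.prodMk hY),
    hXY.map_prod_eq_prod_map_map hX.aemeasurable hY.aemeasurable,
    lintegral_prod _ hf.aemeasurable, lintegral_map hf.lintegral_prod_right' hX]
  exact lintegral_congr fun ω => lintegral_map (hf.comp measurable_prodMk_left) hY

theorem measure_mem_eq_lintegral (hXY : IndepFun X Y μ) (hX : Measurable X)
    (hY : Measurable Y) {s : Set (α × β)} (hs : MeasurableSet s) :
    μ {ω | (X ω, Y ω) ∈ s} = ∫⁻ ω, μ {ω' | (X ω, Y ω') ∈ s} ∂μ := by
  calc μ {ω | (X ω, Y ω) ∈ s} = μ.map (fun ω => (X ω, Y ω)) s :=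
        (Measure.map_apply (hX.prodMk hY) hs).symm
    _ = ∫⁻ ω, μ {ω' | (X ω, Y ω') ∈ s} ∂μ := by
      rw [hXY.map_prod_eq_prod_map_map hX.aemeasurable hY.aemeasurable,
        Measure.prod_apply hs, lintegral_map (measurable_measure_prodMk_left hs) hX]
      exact lintegral_congr fun ω => Measure.map_apply hY (measurable_prodMk_left hs)

end ProbabilityTheory.IndepFun

theorem intervalIntegral.integral_exp_neg_mul {γ : ℝ} (hγ : γ ≠ 0) (x : ℝ) :
    ∫ t in (0 : ℝ)..x, exp (-γ * t) = (1 - exp (-γ * x)) / γ := by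
  rw [intervalIntegral.integral_comp_mul_left (fun t => exp t) (neg_ne_zero.2 hγ), integral_exp,
    mul_zero, exp_zero, smul_eq_mul]
  field_simp
  ring

def HasExpTail {Ω : Type*} [MeasurableSpace Ω] (μ : Measure Ω) (Y : Ω → ℝ) (γ : ℝ) : Prop :=
  ∀ t : ℝ, 0 ≤ t → μ {ω | t < Y ω} = ENNReal.ofReal (exp (-γ * t))

namespace HasExpTail

variable {Ω : Type*} [MeasurableSpace Ω] {μ : Measure Ω} {Y : Ω → ℝ} {γ : ℝ}

theorem measure_le [IsProbabilityMeasure μ] (h : HasExpTail μ Y γ) (hY : Measurable Y)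
    {x : ℝ} (hx : 0 ≤ x) : μ {ω | Y ω ≤ x} = ENNReal.ofReal (1 - exp (-γ * x)) := by
  have hcompl : {ω | Y ω ≤ x} = {ω | x < Y ω}ᶜ := by ext; simp
  rw [hcompl, prob_compl_eq_one_sub (measurableSet_lt measurable_const hY), h x hx,
    ← ENNReal.ofReal_one, ← ENNReal.ofReal_sub _ (exp_nonneg _)]

theorem lintegral_ofReal_min (h : HasExpTail μ Y γ) (hγ : γ ≠ 0) (hY : Measurable Y)
    (hY0 : ∀ ω, 0 ≤ Y ω) {x : ℝ} (hx : 0 ≤ x) :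
    ∫⁻ ω, ENNReal.ofReal (min x (Y ω)) ∂μ = ENNReal.ofReal ((1 - exp (-γ * x)) / γ) := by
  have htail : ∀ t ∈ Ioi (0 : ℝ), μ {ω | t < min x (Y ω)}
      = (Iio x).indicator (fun t => ENNReal.ofReal (exp (-γ * t))) t := by
    intro t ht
    by_cases htx : t < x
    · simp [htx, h t (le_of_lt ht)]
    · simp [htx]
  rw [lintegral_eq_lintegral_meas_lt μ (ae_of_all _ fun ω => le_min hx (hY0 ω))
      (measurable_const.min hY).aemeasurable,
    setLIntegral_congr_fun measurableSet_Ioi htail, lintegral_indicator measurableSet_Iio,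
    Measure.restrict_restrict measurableSet_Iio, Iio_inter_Ioi,
    ← ofReal_integral_eq_lintegral_ofReal, ← integral_Ioc_eq_integral_Ioo,
    ← intervalIntegral.integral_of_le hx, intervalIntegral.integral_exp_neg_mul hγ]
  · exact (continuous_exp.comp (continuous_const.mul continuous_id)).integrableOn_Icc.mono_set
      Ioo_subset_Icc_self
  · exact ae_of_all _ fun t => exp_nonneg _

end HasExpTail

theorem lintegral_ofReal_one_sub_exp_pos {Ω : Type*} [MeasurableSpace Ω] {μ : Measure Ω}
    {X : Ω → ℝ} (hX : Measurable X) (hXpos : 0 < μ {ω | 0 < X ω}) {γ : ℝ} (hγ : 0 < γ) :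
    0 < ∫⁻ ω, ENNReal.ofReal (1 - exp (-γ * X ω)) ∂μ := by
  have hsupp : Function.support (fun ω => ENNReal.ofReal (1 - exp (-γ * X ω)))
      = {ω | 0 < X ω} := by
    ext ω
    simp [hγ]
  rwa [lintegral_pos_iff_support (by fun_prop), hsupp]

theorem stmt3 {Ω : Type*} [MeasureSpace Ω] (μ : Measure Ω) [IsProbabilityMeasure μ]
    (X Y : Ω → ℝ) (hXm : Measurable X) (hYm : Measurable Y)
    (hX0 : ∀ ω, 0 ≤ X ω) (hY0 : ∀ ω, 0 ≤ Y ω)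
    (hindep : ProbabilityTheory.IndepFun X Y μ)
    (γ : ℝ) (hγ : 0 < γ)
    (hYexp : ∀ t : ℝ, 0 ≤ t → μ {ω | t < Y ω} = ENNReal.ofReal (Real.exp (-γ * t)))
    (hXpos : 0 < μ {ω | 0 < X ω}) :
    (μ {ω | Y ω ≤ X ω}).toReal / ∫ ω, min (X ω) (Y ω) ∂μ = γ := by
  have hY : HasExpTail μ Y γ := hYexp
  have hP : μ {ω | Y ω ≤ X ω} = ∫⁻ ω, ENNReal.ofReal (1 - exp (-γ * X ω)) ∂μ := by
    rw [← lintegral_congr fun ω => hY.measure_le hYm (hX0 ω)]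
    exact hindep.measure_mem_eq_lintegral hXm hYm (measurableSet_le measurable_snd measurable_fst)
  have hmin : ∫⁻ ω, ENNReal.ofReal (min (X ω) (Y ω)) ∂μ
      = μ {ω | Y ω ≤ X ω} * (ENNReal.ofReal γ)⁻¹ := by
    rw [hP, ← lintegral_mul_const' _ _ (ENNReal.inv_ne_top.2 (ENNReal.ofReal_pos.2 hγ).ne'),
      hindep.lintegral_comp_eq_lintegral_lintegral (f := fun p => ENNReal.ofReal (min p.1 p.2))
        hXm hYm (measurable_fst.min measurable_snd).ennreal_ofReal]
    refine lintegral_congr fun ω => ?_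
    rw [hY.lintegral_ofReal_min hγ.ne' hYm hY0 (hX0 ω), ENNReal.ofReal_div_of_pos hγ,
      div_eq_mul_inv]
  have hE : ∫ ω, min (X ω) (Y ω) ∂μ = (μ {ω | Y ω ≤ X ω}).toReal / γ := by
    rw [integral_eq_lintegral_of_nonneg_ae (ae_of_all _ fun ω => le_min (hX0 ω) (hY0 ω))
      (hXm.min hYm).aestronglyMeasurable, hmin, ENNReal.toReal_mul, ENNReal.toReal_inv,
      ENNReal.toReal_ofReal hγ.le, div_eq_mul_inv]
  have hP0 : (μ {ω | Y ω ≤ X ω}).toReal ≠ 0 :=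
    ENNReal.toReal_ne_zero.2
      ⟨(hP ▸ lintegral_ofReal_one_sub_exp_pos hXm hXpos hγ).ne', measure_ne_top _ _⟩
  rw [hE, div_div_cancel₀ hP0]
end

section
/- Let R* be defined as the supremum over price vectors p (with p_k ∈ [0, v̄_k]) of R(p) = (∑_k ρ_k (p_k − c) F̄_k(p_k)) / (1 + ∑_k ρ_k F̄_k(p_k)), and suppose this supremum is attained at p*. Then for every feasible price vector p, R* ≥ ∑_k ρ_k (p_k − c − R*) F̄_k(p_k), with equality when p = p*. Consequently p* maximizes the separable function p ↦ ∑_k ρ_k (p_k − c − R*) F̄_k(p_k), and hence each component p*_k maximizes q ↦ (q − c − R*) F̄_k(q) over [0, v̄_k]. -/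
/-!
With `N p = ∑ ρ_k (p_k - c) F̄_k(p_k)`, `D p = 1 + ∑ ρ_k F̄_k(p_k)` and `R* = N p* / D p*`,
one has `∑ ρ_k (p_k - c - R*) F̄_k(p_k) = N p - R* D p + R*`. Since `D > 0`, the optimality
of `p*` for `N / D` says exactly `N p - R* D p ≤ 0`, with equality at `p*` (Dinkelbach).
A maximiser of a separable sum over a box maximises each summand, by varying one coordinate.
-/

open Set

theorem sub_mul_nonpos_of_isMaxOn_div {α : Type*} {S : Set α} {N D R : α → ℝ} {x₀ : α}
    (hR : ∀ x, R x = N x / D x) (hD : ∀ x, 0 < D x) (hmax : IsMaxOn R S x₀) :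
    (∀ x ∈ S, N x - R x₀ * D x ≤ 0) ∧ N x₀ = R x₀ * D x₀ := by
  refine ⟨fun x hx => ?_, by rw [hR, div_mul_cancel₀ _ (hD x₀).ne']⟩
  have hle : N x / D x ≤ R x₀ := hR x ▸ hmax hx
  linarith [(div_le_iff₀ (hD x)).1 hle]

theorem isMaxOn_apply_of_isMaxOn_sum {ι M : Type*} [Fintype ι] [AddCommMonoid M] [PartialOrder M]
    [IsOrderedCancelAddMonoid M] {β : ι → Type*} {S : ∀ i, Set (β i)} {f : ∀ i, β i → M}
    {p : ∀ i, β i} (hp : p ∈ univ.pi S)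
    (hmax : IsMaxOn (fun q => ∑ i, f i (q i)) (univ.pi S) p) (i : ι) :
    IsMaxOn (f i) (S i) (p i) := by
  classical
  refine isMaxOn_iff.2 fun q hq => ?_
  have hsum : ∀ b, ∑ j, f j (Function.update p i b j)
      = f i b + ∑ j ∈ Finset.univ.erase i, f j (p j) := fun b => by
    rw [← Finset.add_sum_erase _ _ (Finset.mem_univ i), Function.update_self]
    congr 1
    exact Finset.sum_congr rfl fun j hj => by rw [Function.update_of_ne (Finset.ne_of_mem_erase hj)]
  have hupdate : Function.update p i q ∈ univ.pi S := by
    intro j _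
    by_cases hj : j = i
    · subst hj; simpa using hq
    · simpa [Function.update_of_ne hj] using hp j trivial
  have hself := hsum (p i)
  rw [Function.update_eq_self] at hself
  have := isMaxOn_iff.1 hmax _ hupdate
  rw [hsum, hself] at this
  exact le_of_add_le_add_right this

theorem stmt6_general (K : Type*) [Fintype K]
    (ρk vbar : K → ℝ) (hρ : ∀ k, 0 < ρk k)
    (c : ℝ)
    (Fbar : K → ℝ → ℝ) (hF : ∀ k x, Fbar k x ∈ Set.Icc (0:ℝ) 1)
    (R : (K → ℝ) → ℝ)
    (hR : ∀ p, R p = (∑ k, ρk k * (p k - c) * Fbar k (p k)) /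
        (1 + ∑ k, ρk k * Fbar k (p k)))
    (pstar : K → ℝ) (hpfeas : ∀ k, pstar k ∈ Set.Icc 0 (vbar k))
    (hopt : ∀ p : K → ℝ, (∀ k, p k ∈ Set.Icc 0 (vbar k)) → R p ≤ R pstar) :
    (∀ p : K → ℝ, (∀ k, p k ∈ Set.Icc 0 (vbar k)) →
        ∑ k, ρk k * (p k - c - R pstar) * Fbar k (p k) ≤ R pstar) ∧
    (∑ k, ρk k * (pstar k - c - R pstar) * Fbar k (pstar k) = R pstar) ∧
    (∀ p : K → ℝ, (∀ k, p k ∈ Set.Icc 0 (vbar k)) →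
        ∑ k, ρk k * (p k - c - R pstar) * Fbar k (p k) ≤
          ∑ k, ρk k * (pstar k - c - R pstar) * Fbar k (pstar k)) ∧
    (∀ k, ∀ q ∈ Set.Icc 0 (vbar k),
        (q - c - R pstar) * Fbar k q ≤ (pstar k - c - R pstar) * Fbar k (pstar k)) := by
  set r := R pstar
  have hD : ∀ p : K → ℝ, 0 < 1 + ∑ k, ρk k * Fbar k (p k) := fun p => by
    have := Finset.sum_nonneg fun k (_ : k ∈ Finset.univ) => mul_nonneg (hρ k).le (hF k (p k)).1
    linarith
  obtain ⟨hle, heq⟩ := sub_mul_nonpos_of_isMaxOn_div (S := univ.pi fun k => Icc 0 (vbar k))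
    (fun p => hR p) hD fun p hp => hopt p (fun k => hp k trivial)
  have hsplit : ∀ p : K → ℝ, ∑ k, ρk k * (p k - c - r) * Fbar k (p k)
      = (∑ k, ρk k * (p k - c) * Fbar k (p k)) - r * (1 + ∑ k, ρk k * Fbar k (p k)) + r := by
    intro p
    rw [Finset.sum_congr rfl fun k _ => show ρk k * (p k - c - r) * Fbar k (p k)
      = ρk k * (p k - c) * Fbar k (p k) - r * (ρk k * Fbar k (p k)) by ring,
      Finset.sum_sub_distrib, ← Finset.mul_sum]
    ring
  have hbound : ∀ p : K → ℝ, (∀ k, p k ∈ Icc 0 (vbar k)) →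
      ∑ k, ρk k * (p k - c - r) * Fbar k (p k) ≤ r := fun p hp => by
    linarith [hsplit p, hle p fun k _ => hp k]
  have hattained : ∑ k, ρk k * (pstar k - c - r) * Fbar k (pstar k) = r := by
    linarith [hsplit pstar]
  have hsep : ∀ p : K → ℝ, (∀ k, p k ∈ Icc 0 (vbar k)) →
      ∑ k, ρk k * (p k - c - r) * Fbar k (p k) ≤
        ∑ k, ρk k * (pstar k - c - r) * Fbar k (pstar k) := fun p hp => by
    rw [hattained]; exact hbound p hp
  refine ⟨hbound, hattained, hsep, fun k q hq => ?_⟩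
  have := isMaxOn_iff.1 (isMaxOn_apply_of_isMaxOn_sum
    (f := fun k q => ρk k * (q - c - r) * Fbar k q)
    (fun k _ => hpfeas k) (fun p hp => hsep p fun k => hp k trivial) k) q hq
  simp only [mul_assoc] at this
  exact le_of_mul_le_mul_left this (hρ k)

theorem stmt6 (K : Type*) [Fintype K] [Nonempty K]
    (ρk vbar : K → ℝ) (hρ : ∀ k, 0 < ρk k) (hv : ∀ k, 0 < vbar k)
    (c : ℝ) (hc : 0 ≤ c)
    (Fbar : K → ℝ → ℝ) (hF : ∀ k x, Fbar k x ∈ Set.Icc (0:ℝ) 1)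
    (R : (K → ℝ) → ℝ)
    (hR : ∀ p, R p = (∑ k, ρk k * (p k - c) * Fbar k (p k)) /
        (1 + ∑ k, ρk k * Fbar k (p k)))
    (pstar : K → ℝ) (hpfeas : ∀ k, pstar k ∈ Set.Icc 0 (vbar k))
    (hopt : ∀ p : K → ℝ, (∀ k, p k ∈ Set.Icc 0 (vbar k)) → R p ≤ R pstar) :
    (∀ p : K → ℝ, (∀ k, p k ∈ Set.Icc 0 (vbar k)) →
        ∑ k, ρk k * (p k - c - R pstar) * Fbar k (p k) ≤ R pstar) ∧
    (∑ k, ρk k * (pstar k - c - R pstar) * Fbar k (pstar k) = R pstar) ∧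
    (∀ p : K → ℝ, (∀ k, p k ∈ Set.Icc 0 (vbar k)) →
        ∑ k, ρk k * (p k - c - R pstar) * Fbar k (p k) ≤
          ∑ k, ρk k * (pstar k - c - R pstar) * Fbar k (pstar k)) ∧
    (∀ k, ∀ q ∈ Set.Icc 0 (vbar k),
        (q - c - R pstar) * Fbar k q ≤ (pstar k - c - R pstar) * Fbar k (pstar k)) :=
  stmt6_general K ρk vbar hρ c Fbar hF R hR pstar hpfeas hopt
end

section
/- Define M(R) = (∑_k ρ_k (p_k(R) − c) F̄_k(p_k(R))) / (1 + ∑_k ρ_k F̄_k(p_k(R))), where p_k(R) maximizes (q − c − R) F̄_k(q) over [0, v̄_k]. If R* is the optimal earning rate, i.e., R* = sup_p R(p) with R(p) = (∑_k ρ_k (p_k − c) F̄_k(p_k))/(1 + ∑_k ρ_k F̄_k(p_k)), then M(R) ≤ R* for all R ≥ 0, and M(R*) = R* (R* is a fixed point of M that maximizes M). -/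
/-! Writing `G r p = ∑ k, ρ k * (p k - c - r) * F̄ k (p k)` for the profit net of the opportunity
cost `r`, a positive denominator gives `r ≤ R p ↔ r ≤ G r p`. Since `p (R*)` maximizes every summand
of `G R*`, `R* ≤ G R* p* ≤ G R* (p (R*))`, hence `R* ≤ M R*`; the reverse inequality is optimality
of `R*`. -/

open Set

lemma le_div_one_add_iff {N D r : ℝ} (hD : 0 ≤ D) : r ≤ N / (1 + D) ↔ r ≤ N - r * D := by
  rw [le_div_iff₀ (by linarith)]
  constructor <;> intro h <;> linarith

section NetProfit

variable {K : Type*} [Fintype K] (ρ : K → ℝ) (c : ℝ) (F : K → ℝ → ℝ)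

def netProfit (r : ℝ) (p : K → ℝ) : ℝ := ∑ k, ρ k * ((p k - c - r) * F k (p k))

lemma netProfit_eq_sub (r : ℝ) (p : K → ℝ) :
    netProfit ρ c F r p = ∑ k, ρ k * (p k - c) * F k (p k) - r * ∑ k, ρ k * F k (p k) := by
  rw [netProfit, Finset.mul_sum, ← Finset.sum_sub_distrib]
  exact Finset.sum_congr rfl fun k _ => by ring

variable {ρ F}

lemma le_rate_iff_le_netProfit (hρ : ∀ k, 0 ≤ ρ k) (hF : ∀ k x, 0 ≤ F k x) (r : ℝ) (p : K → ℝ) :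
    r ≤ (∑ k, ρ k * (p k - c) * F k (p k)) / (1 + ∑ k, ρ k * F k (p k)) ↔
      r ≤ netProfit ρ c F r p := by
  rw [netProfit_eq_sub]
  exact le_div_one_add_iff (Finset.sum_nonneg fun k _ => mul_nonneg (hρ k) (hF k (p k)))

lemma netProfit_le_of_forall_le (hρ : ∀ k, 0 ≤ ρ k) {r : ℝ} {p q : K → ℝ}
    (h : ∀ k, (p k - c - r) * F k (p k) ≤ (q k - c - r) * F k (q k)) :
    netProfit ρ c F r p ≤ netProfit ρ c F r q :=
  Finset.sum_le_sum fun k _ => mul_le_mul_of_nonneg_left (h k) (hρ k)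

end NetProfit

theorem stmt9_general (K : Type*) [Fintype K]
    (ρk vbar : K → ℝ) (hρ : ∀ k, 0 < ρk k)
    (c : ℝ)
    (Fbar : K → ℝ → ℝ) (hF : ∀ k x, Fbar k x ∈ Set.Icc (0:ℝ) 1)
    (R : (K → ℝ) → ℝ)
    (hR : ∀ p, R p = (∑ k, ρk k * (p k - c) * Fbar k (p k)) /
        (1 + ∑ k, ρk k * Fbar k (p k)))
    -- p · k is the best-response price for class k given opportunity cost R
    (pr : ℝ → K → ℝ)
    (hprfeas : ∀ r, 0 ≤ r → ∀ k, pr r k ∈ Set.Icc 0 (vbar k))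
    (hprmax : ∀ r, 0 ≤ r → ∀ k, ∀ q ∈ Set.Icc 0 (vbar k),
        (q - c - r) * Fbar k q ≤ (pr r k - c - r) * Fbar k (pr r k))
    -- Rstar is the optimal earning rate, attained at pstar
    (pstar : K → ℝ) (hpfeas : ∀ k, pstar k ∈ Set.Icc 0 (vbar k))
    (hopt : ∀ p : K → ℝ, (∀ k, p k ∈ Set.Icc 0 (vbar k)) → R p ≤ R pstar)
    (Rstar : ℝ) (hRstar : Rstar = R pstar) (hRstar0 : 0 ≤ Rstar)
    -- M is the response function
    (M : ℝ → ℝ) (hM : ∀ r, M r = R (pr r)) :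
    (∀ r, 0 ≤ r → M r ≤ Rstar) ∧ M Rstar = Rstar := by
  have hρ0 : ∀ k, 0 ≤ ρk k := fun k => (hρ k).le
  have hF0 : ∀ k x, 0 ≤ Fbar k x := fun k x => (hF k x).1
  have hle : ∀ r, 0 ≤ r → M r ≤ Rstar := fun r hr => by
    rw [hM, hRstar]
    exact hopt _ (hprfeas r hr)
  refine ⟨hle, le_antisymm (hle Rstar hRstar0) ?_⟩
  have hstar : Rstar ≤ netProfit ρk c Fbar Rstar pstar :=
    (le_rate_iff_le_netProfit c hρ0 hF0 Rstar pstar).1 (hR pstar ▸ hRstar.le)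
  rw [hM, hR, le_rate_iff_le_netProfit c hρ0 hF0]
  exact hstar.trans <| netProfit_le_of_forall_le c hρ0 fun k =>
    hprmax Rstar hRstar0 k (pstar k) (hpfeas k)

theorem stmt9 (K : Type*) [Fintype K] [Nonempty K]
    (ρk vbar : K → ℝ) (hρ : ∀ k, 0 < ρk k) (hv : ∀ k, 0 < vbar k)
    (c : ℝ) (hc : 0 ≤ c)
    (Fbar : K → ℝ → ℝ) (hF : ∀ k x, Fbar k x ∈ Set.Icc (0:ℝ) 1)
    (R : (K → ℝ) → ℝ)
    (hR : ∀ p, R p = (∑ k, ρk k * (p k - c) * Fbar k (p k)) /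
        (1 + ∑ k, ρk k * Fbar k (p k)))
    -- p · k is the best-response price for class k given opportunity cost R
    (pr : ℝ → K → ℝ)
    (hprfeas : ∀ r, 0 ≤ r → ∀ k, pr r k ∈ Set.Icc 0 (vbar k))
    (hprmax : ∀ r, 0 ≤ r → ∀ k, ∀ q ∈ Set.Icc 0 (vbar k),
        (q - c - r) * Fbar k q ≤ (pr r k - c - r) * Fbar k (pr r k))
    -- Rstar is the optimal earning rate, attained at pstar
    (pstar : K → ℝ) (hpfeas : ∀ k, pstar k ∈ Set.Icc 0 (vbar k))
    (hopt : ∀ p : K → ℝ, (∀ k, p k ∈ Set.Icc 0 (vbar k)) → R p ≤ R pstar)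
    (Rstar : ℝ) (hRstar : Rstar = R pstar) (hRstar0 : 0 ≤ Rstar)
    -- M is the response function
    (M : ℝ → ℝ) (hM : ∀ r, M r = R (pr r)) :
    (∀ r, 0 ≤ r → M r ≤ Rstar) ∧ M Rstar = Rstar :=
  stmt9_general K ρk vbar hρ c Fbar hF R hR pr hprfeas hprmax pstar hpfeas hopt Rstar hRstar hRstar0
    M hM
end
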